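/- Let F₁, F₂ ∈ L²_c(Ω) for Ω ⊂ R², let s₁,…,s_K be continuous sensitivity maps, and let Λ = ∪_{i=1}^q R × [c_i−w_i, c_i+w_i] be a finite union of disjoint horizontal bands with w_i > 0. If the Fourier transforms of s_j·F₁ and s_j·F₂ agree on R² \ Λ for every j, then s_j·F₁ = s_j·F₂ almost everywhere for every j. -/

import Mathlib

open MeasureTheory Complex SchwartzMap
open scoped FourierTransform RealInnerProductSpace ContDiff

lemma exists_schwartz_of_compact {g : ℝ → ℂ} (hg : ContDiff ℝ ∞ g)
    (hsupp : HasCompactSupport g) : ∃ φ : 𝓢(ℝ, ℂ), ⇑φ = g := by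
  refine ⟨⟨g, hg, fun k n => ?_⟩, rfl⟩
  have h1 : HasCompactSupport (fun x : ℝ => ‖x‖ ^ k * ‖iteratedFDeriv ℝ n g x‖) := by
    apply HasCompactSupport.mul_left
    exact (hsupp.iteratedFDeriv n).norm
  have h2 : Continuous (fun x : ℝ => ‖x‖ ^ k * ‖iteratedFDeriv ℝ n g x‖) := by
    exact ((continuous_norm.pow k)).mul (hg.continuous_iteratedFDeriv (by exact_mod_cast le_top)).norm
  obtain ⟨C, hC⟩ := h1.exists_bound_of_continuous h2
  exact ⟨C, fun x => le_trans (le_abs_self _) (hC x)⟩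

lemma ae_zero_of_ft_zero {H : ℝ → ℂ} (hH : Integrable H)
    (h : ∀ t : ℝ, (∫ x : ℝ, H x * Complex.exp (-Complex.I * x * t)) = 0) :
    H =ᵐ[(volume : Measure ℝ)] 0 := by
  have hFT : ∀ t : ℝ, 𝓕 H t = 0 := by
    intro t
    rw [Real.fourier_real_eq_integral_exp_smul]
    rw [← h (2 * Real.pi * t)]
    congr 1 with v
    rw [smul_eq_mul, mul_comm]
    congr 1
    push_cast
    ring_nf
  have hFT0 : 𝓕 H = 0 := funext hFT
  apply ae_eq_zero_of_integral_contDiff_smul_eq_zero hH.locallyIntegrable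
  intro g hg hgsupp
  obtain ⟨φ, hφ⟩ := exists_schwartz_of_compact
    (Complex.ofRealCLM.contDiff.comp hg) (hgsupp.comp_left (g := Complex.ofReal) rfl)
  set ψ := (FourierTransform.fourierCLE ℂ 𝓢(ℝ, ℂ)).symm φ with hψdef
  have hψ : 𝓕 ⇑ψ = ⇑φ := by
    have : FourierTransform.fourierCLE ℂ 𝓢(ℝ, ℂ) ψ = φ := (FourierTransform.fourierCLE ℂ 𝓢(ℝ, ℂ)).apply_symm_apply φ
    rw [← fourier_coe, ← FourierTransform.fourierCLE_apply (R := ℂ) ψ, this]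
  have flip := VectorFourier.integral_fourierIntegral_smul_eq_flip
    (e := Real.fourierChar) (L := innerₗ ℝ) (μ := volume) (ν := volume)
    Real.continuous_fourierChar continuous_inner ψ.integrable hH
  rw [flip_innerₗ] at flip
  have hflipL : (VectorFourier.fourierIntegral Real.fourierChar volume (innerₗ ℝ) ⇑ψ) = 𝓕 ⇑ψ := rfl
  have hflipR : (VectorFourier.fourierIntegral Real.fourierChar volume (innerₗ ℝ) H) = 𝓕 H := rfl
  rw [hflipL, hψ, hflipR, hFT0] at flip
  simp only [Pi.zero_apply, smul_zero, integral_zero] at flip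
  have : ∀ x : ℝ, g x • H x = φ x • H x := by
    intro x
    rw [hφ]
    simp [Complex.real_smul]
  simpa [this] using flip

lemma ft_zero_of_zero_on_ray {H : ℝ → ℂ} (hH : Integrable H) {R : ℝ}
    (hsupp : ∀ x : ℝ, H x ≠ 0 → |x| ≤ R) {M : ℝ}
    (h0 : ∀ t : ℝ, M < t → (∫ x : ℝ, H x * Complex.exp (-Complex.I * x * t)) = 0) :
    ∀ t : ℝ, (∫ x : ℝ, H x * Complex.exp (-Complex.I * x * t)) = 0 := by
  set B := max R 0 with hB
  have hsupp' : ∀ x : ℝ, H x ≠ 0 → |x| ≤ B := fun x hx => (hsupp x hx).trans (le_max_left _ _)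
  set Φ : ℂ → ℂ := fun z => ∫ x : ℝ, H x * Complex.exp (-Complex.I * x * z) with hΦ
  have expbound : ∀ (z : ℂ) (x : ℝ), H x ≠ 0 → ‖Complex.exp (-Complex.I * x * z)‖ ≤ Real.exp (B * ‖z‖) := by
    intro z x hx
    rw [Complex.norm_exp]
    apply Real.exp_le_exp.2
    have : (-Complex.I * x * z).re = x * z.im := by
      simp [Complex.mul_re, Complex.mul_im]
    rw [this]
    calc x * z.im ≤ |x * z.im| := le_abs_self _
      _ = |x| * |z.im| := abs_mul _ _
      _ ≤ B * ‖z‖ := by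
          apply mul_le_mul (hsupp' x hx) (Complex.abs_im_le_norm z) (abs_nonneg _)
          exact le_max_right R 0
  have hmeas : ∀ z : ℂ, AEStronglyMeasurable (fun x : ℝ => H x * Complex.exp (-Complex.I * x * z)) volume := by
    intro z
    exact hH.1.mul (Complex.continuous_exp.comp (by fun_prop)).aestronglyMeasurable
  have hint : ∀ z : ℂ, Integrable (fun x : ℝ => H x * Complex.exp (-Complex.I * x * z)) := by
    intro z
    apply Integrable.mono' (hH.norm.mul_const (Real.exp (B * ‖z‖))) (hmeas z)
    filter_upwards with x
    rcases eq_or_ne (H x) 0 with h | h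
    · simp [h, mul_nonneg (norm_nonneg _) (Real.exp_nonneg _)]
    · rw [norm_mul]
      exact mul_le_mul_of_nonneg_left (expbound z x h) (norm_nonneg _)
  have hdiff : Differentiable ℂ Φ := by
    intro z₀
    have key := hasDerivAt_integral_of_dominated_loc_of_deriv_le (μ := (volume : Measure ℝ))
      (F := fun z (x : ℝ) => H x * Complex.exp (-Complex.I * x * z))
      (F' := fun z (x : ℝ) => H x * (Complex.exp (-Complex.I * x * z) * (-Complex.I * x)))
      (x₀ := z₀) (bound := fun x => ‖H x‖ * (Real.exp (B * (‖z₀‖ + 1)) * B))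
      (Metric.ball_mem_nhds z₀ one_pos) (Filter.Eventually.of_forall hmeas) (hint z₀)
      (hH.1.mul ((Complex.continuous_exp.comp (by fun_prop)).mul (by fun_prop)).aestronglyMeasurable)
      ?_ ((hH.norm.mul_const _)) ?_
    · exact key.2.differentiableAt
    · filter_upwards with x z hz
      rcases eq_or_ne (H x) 0 with h | h
      · simp [h, mul_nonneg (mul_nonneg (Real.exp_nonneg _) (le_max_right R 0)) (norm_nonneg _),
          mul_nonneg (norm_nonneg (H x)) (mul_nonneg (Real.exp_nonneg _) (le_max_right R 0))]
      · rw [norm_mul, norm_mul]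
        apply mul_le_mul_of_nonneg_left _ (norm_nonneg _)
        have h1 : ‖Complex.exp (-Complex.I * x * z)‖ ≤ Real.exp (B * (‖z₀‖ + 1)) := by
          refine (expbound z x h).trans (Real.exp_le_exp.2 ?_)
          apply mul_le_mul_of_nonneg_left _ (le_max_right R 0)
          have := mem_ball_iff_norm.1 hz
          have : ‖z‖ ≤ ‖z₀‖ + ‖z - z₀‖ := by
            calc ‖z‖ = ‖z₀ + (z - z₀)‖ := by ring_nf
              _ ≤ ‖z₀‖ + ‖z - z₀‖ := norm_add_le _ _
          linarith [(mem_ball_iff_norm.1 hz)]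
        have h2 : ‖-Complex.I * x‖ ≤ B := by
          simpa [norm_mul] using hsupp' x h
        exact mul_le_mul h1 h2 (norm_nonneg _) (Real.exp_nonneg _)
    · filter_upwards with x z hz
      have h1 : HasDerivAt (fun z : ℂ => -Complex.I * x * z) (-Complex.I * x) z := by
        simpa using (hasDerivAt_id z).const_mul (-Complex.I * (x : ℂ))
      exact (h1.cexp).const_mul (H x)
  have hanalytic : AnalyticOnNhd ℂ Φ Set.univ :=
    hdiff.differentiableOn.analyticOnNhd isOpen_univ
  have hfreq : ∃ᶠ z in nhdsWithin ((M + 1 : ℝ) : ℂ) {((M + 1 : ℝ) : ℂ)}ᶜ, Φ z = 0 := by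
    have htend : Filter.Tendsto (fun n : ℕ => ((M + 1 + 1 / (n + 1) : ℝ) : ℂ)) Filter.atTop
        (nhdsWithin ((M + 1 : ℝ) : ℂ) {((M + 1 : ℝ) : ℂ)}ᶜ) := by
      rw [tendsto_nhdsWithin_iff]
      constructor
      · apply Filter.Tendsto.comp (Complex.continuous_ofReal.continuousAt)
        have : Filter.Tendsto (fun n : ℕ => (1 : ℝ) / (n + 1)) Filter.atTop (nhds 0) :=
          tendsto_one_div_add_atTop_nhds_zero_nat
        simpa using (tendsto_const_nhds (x := M + 1)).add this
      · filter_upwards with n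
        simp only [Set.mem_compl_iff, Set.mem_singleton_iff]
        intro hcon
        have := Complex.ofReal_injective hcon
        have hpos : (0:ℝ) < 1 / (n + 1) := by positivity
        linarith [hpos, this]
    apply htend.frequently
    apply Filter.Frequently.of_forall
    intro n
    have hlt : M < M + 1 + 1 / (n + 1) := by
      have : (0:ℝ) < 1 / (n + 1) := by positivity
      linarith
    exact h0 _ hlt
  have := hanalytic.eqOn_zero_of_preconnected_of_frequently_eq_zero isPreconnected_univ
    (Set.mem_univ _) hfreq
  intro t
  exact this (Set.mem_univ ((t : ℝ) : ℂ))

lemma norm_exp_neg_I_mul (r : ℝ) : ‖Complex.exp (-Complex.I * r)‖ = 1 := by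
  rw [Complex.norm_exp]
  simp [Complex.mul_re]

lemma integrable_mul_exp {f : ℝ × ℝ → ℂ} (hf : Integrable f (volume : Measure (ℝ × ℝ)))
    {c : ℝ × ℝ → ℝ} (hc : Continuous c) :
    Integrable (fun x => f x * Complex.exp (-Complex.I * c x)) (volume : Measure (ℝ × ℝ)) := by
  apply Integrable.mono' hf.norm
    (hf.1.mul (Complex.continuous_exp.comp (by fun_prop)).aestronglyMeasurable)
  filter_upwards with x
  simp only [Pi.mul_apply, Function.comp_apply]
  rw [norm_mul, norm_exp_neg_I_mul, mul_one]

lemma cont_mul_integrable {sj F : ℝ × ℝ → ℂ} (hsj : Continuous sj)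
    (hF : MemLp F 2 (volume : Measure (ℝ × ℝ))) (hc : HasCompactSupport F) :
    Integrable (fun x => sj x * F x) (volume : Measure (ℝ × ℝ)) := by
  obtain ⟨C, hC⟩ := hc.exists_bound_of_continuousOn hsj.continuousOn
  have hmem : MemLp (fun x => sj x * F x) 2 (volume : Measure (ℝ × ℝ)) := by
    apply MemLp.of_le_mul hF (hsj.aestronglyMeasurable.mul hF.1) (c := max C 0)
    filter_upwards with x
    simp only [Pi.mul_apply]
    rcases em (x ∈ tsupport F) with hx | hx
    · rw [norm_mul]
      exact mul_le_mul_of_nonneg_right ((hC x hx).trans (le_max_left _ _)) (norm_nonneg _)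
    · simp [image_eq_zero_of_notMem_tsupport hx]
  have := hmem.mono_exponent_of_measure_support_ne_top
    (s := tsupport F) (fun x hx => by simp [image_eq_zero_of_notMem_tsupport hx])
    hc.measure_lt_top.ne one_le_two
  exact memLp_one_iff_integrable.mp this

/-- Corollary 2.2 (uniqueness in limited-data multi-coil MRI): if the Fourier
transforms of `s j * F₁` and `s j * F₂` agree off a finite union of disjoint
horizontal bands, then `s j * F₁ = s j * F₂` a.e. for every coil `j`. -/
theorem mri_uniqueness
    (K q : ℕ) (Ω : Set (ℝ × ℝ))
    (F₁ F₂ : ℝ × ℝ → ℂ)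
    (hF₁ : MemLp F₁ 2 (volume : Measure (ℝ × ℝ)))
    (hF₂ : MemLp F₂ 2 (volume : Measure (ℝ × ℝ)))
    (hc₁ : HasCompactSupport F₁) (hc₂ : HasCompactSupport F₂)
    (hΩ₁ : Function.support F₁ ⊆ Ω) (hΩ₂ : Function.support F₂ ⊆ Ω)
    (s : Fin K → ℝ × ℝ → ℂ) (hs : ∀ j, Continuous (s j))
    (c w : Fin q → ℝ) (hw : ∀ i, 0 < w i)
    (hdisj : Pairwise fun i i' =>
      Disjoint (Set.Icc (c i - w i) (c i + w i)) (Set.Icc (c i' - w i') (c i' + w i')))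
    (hdata : ∀ j : Fin K, ∀ k : ℝ × ℝ,
      k ∉ ⋃ i : Fin q, (Set.univ : Set ℝ) ×ˢ Set.Icc (c i - w i) (c i + w i) →
      (∫ x : ℝ × ℝ, s j x * F₁ x * Complex.exp (-Complex.I * (x.1 * k.1 + x.2 * k.2))) =
      (∫ x : ℝ × ℝ, s j x * F₂ x * Complex.exp (-Complex.I * (x.1 * k.1 + x.2 * k.2)))) :
    ∀ j : Fin K,
      (fun x => s j x * F₁ x) =ᵐ[(volume : Measure (ℝ × ℝ))] (fun x => s j x * F₂ x) := by
  intro j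
  have hint1 : Integrable (fun x => s j x * F₁ x) (volume : Measure (ℝ × ℝ)) :=
    cont_mul_integrable (hs j) hF₁ hc₁
  have hint2 : Integrable (fun x => s j x * F₂ x) (volume : Measure (ℝ × ℝ)) :=
    cont_mul_integrable (hs j) hF₂ hc₂
  set g : ℝ × ℝ → ℂ := fun x => s j x * F₁ x - s j x * F₂ x with hgdef
  have hintg : Integrable g (volume : Measure (ℝ × ℝ)) := hint1.sub hint2
  obtain ⟨R, hRsub⟩ := (hc₁.isCompact.union hc₂.isCompact).isBounded.subset_closedBall (0 : ℝ × ℝ)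
  have hgsupp : ∀ x : ℝ × ℝ, g x ≠ 0 → ‖x‖ ≤ R := by
    intro x hx
    have hmem : x ∈ tsupport F₁ ∪ tsupport F₂ := by
      by_contra hmem
      rw [Set.mem_union] at hmem
      push_neg at hmem
      apply hx
      have h1 : F₁ x = 0 := image_eq_zero_of_notMem_tsupport hmem.1
      have h2 : F₂ x = 0 := image_eq_zero_of_notMem_tsupport hmem.2
      simp [hgdef, h1, h2]
    simpa [Metric.mem_closedBall, dist_zero_right] using hRsub hmem
  -- the full 2D transform of g vanishes off the bands
  have hphase : ∀ k : ℝ × ℝ, Continuous fun x : ℝ × ℝ => x.1 * k.1 + x.2 * k.2 := by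
    intro k; fun_prop
  have hGmod : ∀ k : ℝ × ℝ,
      Integrable (fun x : ℝ × ℝ => g x *
        Complex.exp (-Complex.I * ((x.1 * k.1 + x.2 * k.2 : ℝ) : ℂ))) volume :=
    fun k => integrable_mul_exp hintg (hphase k)
  have hcast : ∀ (k : ℝ × ℝ) (x : ℝ × ℝ),
      ((x.1 * k.1 + x.2 * k.2 : ℝ) : ℂ) = (x.1 : ℂ) * k.1 + (x.2 : ℂ) * k.2 := by
    intro k x; push_cast; ring
  have hG0 : ∀ k : ℝ × ℝ,
      k ∉ ⋃ i : Fin q, (Set.univ : Set ℝ) ×ˢ Set.Icc (c i - w i) (c i + w i) →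
      (∫ x : ℝ × ℝ, g x * Complex.exp (-Complex.I * (x.1 * k.1 + x.2 * k.2))) = 0 := by
    intro k hk
    have e1 : Integrable (fun x : ℝ × ℝ => s j x * F₁ x *
        Complex.exp (-Complex.I * ((x.1 * k.1 + x.2 * k.2 : ℝ) : ℂ))) volume :=
      integrable_mul_exp hint1 (hphase k)
    have e2 : Integrable (fun x : ℝ × ℝ => s j x * F₂ x *
        Complex.exp (-Complex.I * ((x.1 * k.1 + x.2 * k.2 : ℝ) : ℂ))) volume :=
      integrable_mul_exp hint2 (hphase k)
    simp only [hcast k] at e1 e2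
    have : (fun x : ℝ × ℝ => g x * Complex.exp (-Complex.I * (x.1 * k.1 + x.2 * k.2)))
        = fun x : ℝ × ℝ =>
          s j x * F₁ x * Complex.exp (-Complex.I * (x.1 * k.1 + x.2 * k.2)) -
          s j x * F₂ x * Complex.exp (-Complex.I * (x.1 * k.1 + x.2 * k.2)) := by
      funext x; rw [hgdef]; ring
    rw [this, integral_sub e1 e2, hdata j k hk, sub_self]
  have exp_arg : ∀ a b : ℝ, -Complex.I * ((a * b : ℝ) : ℂ) = -Complex.I * a * b := by
    intro a b; push_cast; ring
  have hintP : ∀ k₁ : ℝ, Integrable (fun x : ℝ × ℝ => g x *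
      Complex.exp (-Complex.I * ((x.1 * k₁ : ℝ) : ℂ))) volume :=
    fun k₁ => integrable_mul_exp hintg (by fun_prop)
  set H : ℝ → ℝ → ℂ :=
    fun k₁ y => ∫ x₁ : ℝ, g (x₁, y) * Complex.exp (-Complex.I * ((x₁ * k₁ : ℝ) : ℂ)) with hHdef
  have hfub : ∀ k₁ k₂ : ℝ,
      (∫ x : ℝ × ℝ, g x * Complex.exp (-Complex.I * (x.1 * k₁ + x.2 * k₂))) =
      ∫ y : ℝ, H k₁ y * Complex.exp (-Complex.I * y * k₂) := by
    intro k₁ k₂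
    have h1 : Integrable (fun z : ℝ × ℝ => g z * Complex.exp (-Complex.I * ((z.1 * k₁ : ℝ) : ℂ))
        * Complex.exp (-Complex.I * ((z.2 * k₂ : ℝ) : ℂ))) volume := by
      apply (hGmod (k₁, k₂)).congr
      filter_upwards with x
      rw [mul_assoc, ← Complex.exp_add]
      congr 2
      push_cast; ring
    have h1' : Integrable (fun z : ℝ × ℝ => g z * Complex.exp (-Complex.I * ((z.1 * k₁ : ℝ) : ℂ))
        * Complex.exp (-Complex.I * ((z.2 * k₂ : ℝ) : ℂ))) ((volume : Measure ℝ).prod volume) := by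
      rw [← Measure.volume_eq_prod]; exact h1
    calc (∫ x : ℝ × ℝ, g x * Complex.exp (-Complex.I * (x.1 * k₁ + x.2 * k₂)))
        = ∫ x : ℝ × ℝ, g x * Complex.exp (-Complex.I * ((x.1 * k₁ : ℝ) : ℂ))
            * Complex.exp (-Complex.I * ((x.2 * k₂ : ℝ) : ℂ)) := by
          refine integral_congr_ae (Filter.Eventually.of_forall fun x => ?_)
          dsimp only
          rw [mul_assoc, ← Complex.exp_add]
          congr 2
          push_cast; ring
      _ = ∫ x₁ : ℝ, ∫ y : ℝ, g (x₁, y) * Complex.exp (-Complex.I * ((x₁ * k₁ : ℝ) : ℂ))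
            * Complex.exp (-Complex.I * ((y * k₂ : ℝ) : ℂ)) := by
          rw [Measure.volume_eq_prod, integral_prod _ h1']
      _ = ∫ y : ℝ, ∫ x₁ : ℝ, g (x₁, y) * Complex.exp (-Complex.I * ((x₁ * k₁ : ℝ) : ℂ))
            * Complex.exp (-Complex.I * ((y * k₂ : ℝ) : ℂ)) := integral_integral_swap h1'
      _ = ∫ y : ℝ, H k₁ y * Complex.exp (-Complex.I * y * k₂) := by
          refine integral_congr_ae (Filter.Eventually.of_forall fun y => ?_)
          dsimp only
          rw [integral_mul_const, exp_arg]
  obtain ⟨M, hM⟩ : ∃ M : ℝ, ∀ i : Fin q, c i + w i ≤ M := by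
    rcases (Set.finite_range fun i : Fin q => c i + w i).bddAbove with ⟨M, hM⟩
    exact ⟨M, fun i => hM ⟨i, rfl⟩⟩
  have hnotin : ∀ (k₁ t : ℝ), M < t →
      ((k₁, t) : ℝ × ℝ) ∉ ⋃ i : Fin q, (Set.univ : Set ℝ) ×ˢ Set.Icc (c i - w i) (c i + w i) := by
    intro k₁ t ht hmem
    simp only [Set.mem_iUnion, Set.mem_prod, Set.mem_Icc] at hmem
    obtain ⟨i, -, -, h2⟩ := hmem
    have := hM i; linarith
  have hHint : ∀ k₁ : ℝ, Integrable (H k₁) (volume : Measure ℝ) := by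
    intro k₁
    have h1 : Integrable (fun z : ℝ × ℝ => g z * Complex.exp (-Complex.I * ((z.1 * k₁ : ℝ) : ℂ)))
        ((volume : Measure ℝ).prod volume) := by
      rw [← Measure.volume_eq_prod]; exact hintP k₁
    exact h1.swap.integral_prod_left
  have hHsupp : ∀ k₁ : ℝ, ∀ y : ℝ, H k₁ y ≠ 0 → |y| ≤ R := by
    intro k₁ y hy
    by_contra hYR
    push_neg at hYR
    apply hy
    have hz : ∀ x₁ : ℝ, g (x₁, y) = 0 := by
      intro x₁
      by_contra hgx
      have h2 : |y| ≤ ‖((x₁, y) : ℝ × ℝ)‖ := by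
        simpa using norm_snd_le ((x₁, y) : ℝ × ℝ)
      have := hgsupp _ hgx
      linarith
    simp only [hHdef]
    simp [hz]
  have hGall : ∀ k₁ t : ℝ, (∫ y : ℝ, H k₁ y * Complex.exp (-Complex.I * y * t)) = 0 := by
    intro k₁
    apply ft_zero_of_zero_on_ray (hHint k₁) (hHsupp k₁) (M := M)
    intro t ht
    rw [← hfub k₁ t]
    exact hG0 (k₁, t) (hnotin k₁ t ht)
  have haeH : ∀ᵐ y : ℝ, ∀ r : ℚ, H (r : ℝ) y = 0 := by
    rw [ae_all_iff]
    intro r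
    filter_upwards [ae_zero_of_ft_zero (hHint r) (hGall r)] with y hy using hy
  have haeInt : ∀ᵐ y : ℝ, Integrable (fun x₁ => g (x₁, y)) (volume : Measure ℝ) := by
    have h1 : Integrable g ((volume : Measure ℝ).prod volume) := by
      rw [← Measure.volume_eq_prod]; exact hintg
    exact h1.prod_left_ae
  have hkey : ∀ᵐ y : ℝ, (fun x₁ => g (x₁, y)) =ᵐ[(volume : Measure ℝ)] 0 := by
    filter_upwards [haeH, haeInt] with y h1 h2
    apply ae_zero_of_ft_zero h2
    have hcont : Continuous fun t : ℝ =>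
        ∫ x₁ : ℝ, g (x₁, y) * Complex.exp (-Complex.I * ((x₁ * t : ℝ) : ℂ)) := by
      apply continuous_of_dominated (bound := fun x₁ => ‖g (x₁, y)‖)
      · intro t
        exact h2.1.mul (Complex.continuous_exp.comp (by fun_prop)).aestronglyMeasurable
      · intro t
        filter_upwards with a
        rw [norm_mul, norm_exp_neg_I_mul, mul_one]
      · exact h2.norm
      · filter_upwards with a
        fun_prop
    have heq : (fun t : ℝ => ∫ x₁ : ℝ, g (x₁, y) * Complex.exp (-Complex.I * ((x₁ * t : ℝ) : ℂ)))
        = fun _ => (0 : ℂ) := by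
      apply Continuous.ext_on Rat.denseRange_cast hcont continuous_const
      rintro t ⟨r, rfl⟩
      exact h1 r
    intro t
    have h3 := congrFun heq t
    simp only [exp_arg] at h3
    exact h3
  have hnorm0 : (∫ x : ℝ × ℝ, ‖g x‖) = 0 := by
    have h1 : Integrable (fun x : ℝ × ℝ => ‖g x‖) ((volume : Measure ℝ).prod volume) := by
      rw [← Measure.volume_eq_prod]; exact hintg.norm
    rw [Measure.volume_eq_prod, integral_prod _ h1, integral_integral_swap h1]
    apply integral_eq_zero_of_ae
    filter_upwards [hkey] with y hy
    apply integral_eq_zero_of_ae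
    filter_upwards [hy] with a ha
    simp [ha]
  have hg0 : g =ᵐ[(volume : Measure (ℝ × ℝ))] 0 := by
    have := (integral_eq_zero_iff_of_nonneg (fun x => norm_nonneg (g x)) hintg.norm).1 hnorm0
    filter_upwards [this] with x hx
    simpa using hx
  filter_upwards [hg0] with x hx
  have hx' : s j x * F₁ x - s j x * F₂ x = 0 := hx
  exact sub_eq_zero.mp hx'
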